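/- For n >= 2 and a pair r of opposite vertices of the punctured 2n-gon, the class Psi(cw(r)) of centrally symmetric triangulations of the punctured 2n-gon containing the clockwise central chord pair at r is isomorphic (as a graph under flips) to the type-A associahedron graph a_{n-1}, whose vertices are triangulations of an (n+2)-gon. -/

import Mathlib

open scoped BigOperators

/-- `x` lies strictly inside the (clockwise) arc from `a` to `b` of the regular `m`-gon,
whose vertices are labeled by `ZMod m`. -/
def arcMem (m : ℕ) (a b x : ZMod m) : Prop :=
  0 < (x - a).val ∧ (x - a).val < (b - a).val

/-- Ordered version of the crossing predicate for the chords `{a,b}` and `{c,d}`: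
exactly one of `c, d` lies strictly inside the open arc from `a` to `b`. -/
def crossPairs (m : ℕ) (a b c d : ZMod m) : Prop :=
  (arcMem m a b c ∧ arcMem m b a d) ∨ (arcMem m a b d ∧ arcMem m b a c)

/-- Two chords of the convex `m`-gon cross (in their interiors). -/
def Crosses (m : ℕ) (e f : Sym2 (ZMod m)) : Prop :=
  ∃ a b c d : ZMod m, e = s(a, b) ∧ f = s(c, d) ∧ crossPairs m a b c d

/-- `e` is a diagonal of the convex `m`-gon: its endpoints are distinct and non-adjacent. -/
def IsDiagonal (m : ℕ) (e : Sym2 (ZMod m)) : Prop :=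
  ∃ a b : ZMod m, e = s(a, b) ∧ a ≠ b ∧ b ≠ a + 1 ∧ a ≠ b + 1

/-- A triangulation of the convex `m`-gon: a maximal set of pairwise non-crossing diagonals. -/
def IsTriangulation (m : ℕ) (T : Finset (Sym2 (ZMod m))) : Prop :=
  (∀ e ∈ T, IsDiagonal m e) ∧
  (∀ e ∈ T, ∀ f ∈ T, ¬ Crosses m e f) ∧
  (∀ e, IsDiagonal m e → e ∉ T → ∃ f ∈ T, Crosses m e f)

/-- A diagonal of the regular `(2n+2)`-gon is central if it joins two opposite vertices,
i.e. passes through the center of the polygon. -/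
def IsCentral (n : ℕ) (e : Sym2 (ZMod (2 * n + 2))) : Prop :=
  ∃ a : ZMod (2 * n + 2), e = s(a, a + (n : ZMod (2 * n + 2)) + 1)

/-- The central diagonal of the regular `(2n+2)`-gon with endpoint `a`. -/
def centralDiag (n : ℕ) (a : ZMod (2 * n + 2)) : Sym2 (ZMod (2 * n + 2)) :=
  s(a, a + (n : ZMod (2 * n + 2)) + 1)

/-- A centrally-symmetric triangulation of the regular `(2n+2)`-gon: a triangulation invariant
under 180-degree rotation, i.e. under adding `n+1` to every vertex label. -/
def CSTriangulation (n : ℕ) (T : Finset (Sym2 (ZMod (2 * n + 2)))) : Prop :=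
  IsTriangulation (2 * n + 2) T ∧
  ∀ e ∈ T, Sym2.map (· + ((n : ZMod (2 * n + 2)) + 1)) e ∈ T

/-- The 1-skeleton of the type-A associahedron on the triangulations of the convex `m`-gon:
two triangulations are adjacent iff they differ in a single diagonal flip. -/
def assocGraphA (m : ℕ) :
    SimpleGraph {T : Finset (Sym2 (ZMod m)) // IsTriangulation m T} where
  Adj T T' := T ≠ T' ∧ (T.val \ T'.val).card ≤ 1 ∧ (T'.val \ T.val).card ≤ 1
  symm := ⟨fun _ _ h => ⟨Ne.symm h.1, h.2.2, h.2.1⟩⟩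
  loopless := ⟨fun _ h => h.1 rfl⟩

/-- Chords of the punctured `2n`-gon: non-central diagonals of the `2n`-gon, or central chords
tangent to the central disc, recorded by their polygon vertex together with their orientation
(`true` = emanating clockwise, `false` = counterclockwise). -/
inductive DChord (n : ℕ) where
  | diag : Sym2 (ZMod (2 * n)) → DChord n
  | central : ZMod (2 * n) → Bool → DChord n
deriving DecidableEq

/-- Validity of a chord of the punctured `2n`-gon: a diagonal must have distinct, non-adjacent,
non-opposite endpoints (the segments joining opposite vertices would meet the disc). -/
def DChord.IsValid (n : ℕ) : DChord n → Prop
  | .diag e => ∃ a b : ZMod (2 * n),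
      e = s(a, b) ∧ a ≠ b ∧ b ≠ a + 1 ∧ a ≠ b + 1 ∧ b ≠ a + (n : ZMod (2 * n))
  | .central _ _ => True

/-- A non-central diagonal crosses the central chord at vertex `c` iff it separates `c` from the
central disc, i.e. `c` lies strictly inside the minor arc cut off by the diagonal. -/
def diagCrossCentral (n : ℕ) (e : Sym2 (ZMod (2 * n))) (c : ZMod (2 * n)) : Prop :=
  ∃ a b : ZMod (2 * n), e = s(a, b) ∧ (b - a).val < n ∧ arcMem (2 * n) a b c

/-- The crossing relation for chords of the punctured `2n`-gon.  Two central chords cross iff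
they have opposite orientations and are based at different vertex pairs. -/
def DChord.Cross (n : ℕ) : DChord n → DChord n → Prop
  | .diag e, .diag f => Crosses (2 * n) e f
  | .diag e, .central c _ => diagCrossCentral n e c
  | .central c _, .diag e => diagCrossCentral n e c
  | .central c b, .central d b' => b ≠ b' ∧ d ≠ c ∧ d ≠ c + (n : ZMod (2 * n))

/-- 180-degree rotation of a chord of the punctured `2n`-gon. -/
def DChord.rot (n : ℕ) : DChord n → DChord n
  | .diag e => .diag (Sym2.map (· + (n : ZMod (2 * n))) e)
  | .central c b => .central (c + (n : ZMod (2 * n))) b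

/-- A triangulation of the punctured `2n`-gon: a maximal set of pairwise non-crossing chords. -/
def DTriangulation (n : ℕ) (T : Finset (DChord n)) : Prop :=
  (∀ e ∈ T, DChord.IsValid n e) ∧
  (∀ e ∈ T, ∀ f ∈ T, ¬ DChord.Cross n e f) ∧
  (∀ e, DChord.IsValid n e → e ∉ T → ∃ f ∈ T, DChord.Cross n e f)

/-- A centrally symmetric triangulation of the punctured `2n`-gon: one invariant under
180-degree rotation. -/
def DCSTriangulation (n : ℕ) (T : Finset (DChord n)) : Prop :=
  DTriangulation n T ∧ ∀ e ∈ T, DChord.rot n e ∈ T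

/-- The 1-skeleton of the type-D associahedron `\U0001d521\u2099`: vertices are the centrally symmetric
triangulations of the punctured `2n`-gon; two triangulations are adjacent iff one is obtained
from the other by flipping a centrally symmetric pair of chords. -/
def typeDGraph (n : ℕ) :
    SimpleGraph {T : Finset (DChord n) // DCSTriangulation n T} where
  Adj T T' := T ≠ T' ∧ (T.val \ T'.val).card ≤ 2 ∧ (T'.val \ T.val).card ≤ 2
  symm := ⟨fun _ _ h => ⟨Ne.symm h.1, h.2.2, h.2.1⟩⟩
  loopless := ⟨fun _ h => h.1 rfl⟩


/-!
Rotating the polygon by `-a` reduces the statement to `a = 0`. The clockwise central chords at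
`0` and `n` cut the punctured `2n`-gon into two halves exchanged by the half-turn, and each half
is an `(n + 2)`-gon with vertices `0, …, n` and the puncture. A centrally symmetric triangulation
containing both chords is therefore determined by its chords in the upper half, and these form
an arbitrary triangulation of that `(n + 2)`-gon: a chord of the upper half and a rotated chord
cross only if the corresponding diagonals cross, and every chord compatible with the two central
chords lies in one of the halves. Flipping a symmetric pair flips one diagonal of the half, so
this bijection is a graph isomorphism.
-/

namespace ZMod

variable {m : ℕ}

lemma val_sub_eq_ite [NeZero m] (x y : ZMod m) :
    (x - y).val = if y.val ≤ x.val then x.val - y.val else x.val + m - y.val := by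
  split_ifs with h
  · exact val_sub h
  · have hlt : x.val + m - y.val < m := by have := x.val_lt; omega
    have hxy : x - y = ((x.val + m - y.val : ℕ) : ZMod m) := by
      push_cast [Nat.cast_sub (by have := y.val_lt; omega : y.val ≤ x.val + m)]
      simp
    rw [hxy, val_cast_of_lt hlt]

lemma val_natCast_of_lt_two_mul {u : ℕ} (hu : u < 2 * m) :
    (u : ZMod m).val = if u < m then u else u - m := by
  split_ifs with h
  · exact val_cast_of_lt h
  · obtain ⟨k, rfl⟩ := Nat.exists_eq_add_of_le (not_lt.mp h)
    rw [Nat.cast_add, natCast_self, zero_add, val_cast_of_lt (by omega), Nat.add_sub_cancel_left]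

end ZMod

section Polygon

variable {m : ℕ}

lemma arcMem_iff_val [NeZero m] (a b x : ZMod m) :
    arcMem m a b x ↔ (a.val < x.val ∧ (x.val < b.val ∨ b.val < a.val)) ∨
      (x.val < b.val ∧ x.val < a.val ∧ b.val < a.val) := by
  have := a.val_lt; have := b.val_lt; have := x.val_lt
  rw [arcMem, ZMod.val_sub_eq_ite, ZMod.val_sub_eq_ite]
  split_ifs <;> omega

lemma crossPairs_swap_left (a b c d : ZMod m) :
    crossPairs m b a c d ↔ crossPairs m a b c d := by
  unfold crossPairs; tauto

lemma crossPairs_swap_right (a b c d : ZMod m) :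
    crossPairs m a b d c ↔ crossPairs m a b c d := by
  unfold crossPairs; tauto

lemma crossPairs_comm [NeZero m] (a b c d : ZMod m) :
    crossPairs m c d a b ↔ crossPairs m a b c d := by
  have := a.val_lt; have := b.val_lt; have := c.val_lt; have := d.val_lt
  simp only [crossPairs, arcMem_iff_val]
  omega

lemma crosses_mk_iff (a b c d : ZMod m) :
    Crosses m s(a, b) s(c, d) ↔ crossPairs m a b c d := by
  refine ⟨?_, fun h => ⟨a, b, c, d, rfl, rfl, h⟩⟩
  rintro ⟨a', b', c', d', he, hf, h⟩
  rw [Sym2.eq_iff] at he hf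
  rcases he with ⟨rfl, rfl⟩ | ⟨rfl, rfl⟩ <;> rcases hf with ⟨rfl, rfl⟩ | ⟨rfl, rfl⟩ <;>
    simpa only [crossPairs_swap_left, crossPairs_swap_right] using h

lemma crosses_comm [NeZero m] (e f : Sym2 (ZMod m)) : Crosses m e f ↔ Crosses m f e := by
  induction e using Sym2.ind with | _ a b =>
  induction f using Sym2.ind with | _ c d =>
  rw [crosses_mk_iff, crosses_mk_iff, crossPairs_comm]

lemma crosses_map_add (t : ZMod m) (e f : Sym2 (ZMod m)) :
    Crosses m (e.map (· + t)) (f.map (· + t)) ↔ Crosses m e f := by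
  induction e using Sym2.ind with | _ a b =>
  induction f using Sym2.ind with | _ c d =>
  simp only [Sym2.map_mk, crosses_mk_iff, crossPairs, arcMem, add_sub_add_right_eq_sub]

lemma crosses_natCast_iff [NeZero m] {u v w z : ℕ} (huv : u < v) (hv : v < m) (hwz : w < z)
    (hz : z < m) :
    Crosses m s((u : ZMod m), (v : ZMod m)) s((w : ZMod m), (z : ZMod m)) ↔
      (u < w ∧ w < v ∧ v < z) ∨ (w < u ∧ u < z ∧ z < v) := by
  simp only [crosses_mk_iff, crossPairs, arcMem_iff_val, ZMod.val_cast_of_lt (hv.trans' huv),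
    ZMod.val_cast_of_lt hv, ZMod.val_cast_of_lt (hz.trans' hwz), ZMod.val_cast_of_lt hz]
  omega

lemma isDiagonal_natCast [NeZero m] {u v : ℕ} (huv : u + 2 ≤ v) (hv : v < m)
    (h : ¬(u = 0 ∧ v + 1 = m)) : IsDiagonal m s((u : ZMod m), (v : ZMod m)) := by
  refine ⟨u, v, rfl, ?_⟩
  simp (disch := omega) only [ne_eq, ← Nat.cast_add_one, ← (ZMod.val_injective m).eq_iff,
    ZMod.val_natCast_of_lt_two_mul]
  split_ifs <;> omega

lemma IsDiagonal.exists_natCast [NeZero m] {d : Sym2 (ZMod m)} (hd : IsDiagonal m d) :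
    ∃ u v : ℕ, u + 2 ≤ v ∧ v < m ∧ ¬(u = 0 ∧ v + 1 = m) ∧ d = s((u : ZMod m), (v : ZMod m)) := by
  obtain ⟨i, j, rfl, hij⟩ := hd
  rw [← ZMod.natCast_zmod_val i, ← ZMod.natCast_zmod_val j] at hij ⊢
  have hi := i.val_lt
  have hj := j.val_lt
  simp (disch := omega) only [ne_eq, ← Nat.cast_add_one, ← (ZMod.val_injective m).eq_iff,
    ZMod.val_cast_of_lt, ZMod.val_natCast_of_lt_two_mul] at hij
  rcases Nat.lt_or_gt_of_ne hij.1 with h | h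
  · exact ⟨i.val, j.val, by split_ifs at hij <;> omega, hj, by split_ifs at hij <;> omega, rfl⟩
  · exact ⟨j.val, i.val, by split_ifs at hij <;> omega, hi, by split_ifs at hij <;> omega,
      Sym2.eq_swap⟩

end Polygon

lemma diagCrossCentral_mk_iff {n : ℕ} (x y c : ZMod (2 * n)) :
    diagCrossCentral n s(x, y) c ↔
      ((y - x).val < n ∧ arcMem (2 * n) x y c) ∨ ((x - y).val < n ∧ arcMem (2 * n) y x c) := by
  constructor
  · rintro ⟨a, b, he, h⟩
    rcases Sym2.eq_iff.mp he with ⟨rfl, rfl⟩ | ⟨rfl, rfl⟩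
    exacts [Or.inl h, Or.inr h]
  · rintro (h | h)
    exacts [⟨x, y, rfl, h⟩, ⟨y, x, Sym2.eq_swap, h⟩]

namespace DChord

variable {n : ℕ}

def shift (t : ZMod (2 * n)) : DChord n → DChord n
  | .diag e => .diag (e.map (· + t))
  | .central c b => .central (c + t) b

lemma rot_eq_shift : rot n = shift (n : ZMod (2 * n)) := by
  funext e; cases e <;> rfl

lemma shift_shift (s t : ZMod (2 * n)) (e : DChord n) : (e.shift s).shift t = e.shift (s + t) := by
  cases e with
  | diag e => simp only [shift, Sym2.map_map, Function.comp_def, add_assoc]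
  | central c b => simp only [shift, add_assoc]

lemma shift_zero (e : DChord n) : e.shift 0 = e := by
  cases e with
  | diag e => simp [shift]
  | central c b => simp [shift]

def shiftEquiv (t : ZMod (2 * n)) : DChord n ≃ DChord n where
  toFun := shift t
  invFun := shift (-t)
  left_inv e := by rw [shift_shift, add_neg_cancel, shift_zero]
  right_inv e := by rw [shift_shift, neg_add_cancel, shift_zero]

lemma natCast_add_natCast_self : (n : ZMod (2 * n)) + n = 0 := by
  rw [← Nat.cast_add, ← two_mul, ZMod.natCast_self]

lemma eq_add_natCast_comm {x y : ZMod (2 * n)} : x = y + n ↔ y = x + n := by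
  constructor <;> rintro rfl <;> rw [add_assoc, natCast_add_natCast_self, add_zero]

lemma rot_rot (e : DChord n) : rot n (rot n e) = e := by
  rw [rot_eq_shift, shift_shift, natCast_add_natCast_self, shift_zero]

lemma rot_eq_iff {c c' : DChord n} : rot n c = c' ↔ c = rot n c' :=
  ⟨fun h => h ▸ (rot_rot c).symm, fun h => h ▸ rot_rot c'⟩

lemma shift_rot (t : ZMod (2 * n)) (e : DChord n) : (rot n e).shift t = rot n (e.shift t) := by
  rw [rot_eq_shift, shift_shift, shift_shift, add_comm]

lemma rot_central_zero (b : Bool) : rot n (.central 0 b) = .central n b := by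
  rw [rot, zero_add]

lemma rot_central_natCast (b : Bool) : rot n (.central n b) = .central 0 b := by
  rw [rot, natCast_add_natCast_self]

lemma cross_comm [NeZero (2 * n)] (e f : DChord n) : Cross n e f ↔ Cross n f e := by
  cases e <;> cases f
  case diag.diag e f => exact crosses_comm e f
  case central.central c b d b' =>
    exact and_congr ne_comm (and_congr ne_comm (not_congr eq_add_natCast_comm))
  all_goals exact Iff.rfl

lemma diagCrossCentral_map_add (t : ZMod (2 * n)) (e : Sym2 (ZMod (2 * n))) (c : ZMod (2 * n)) :
    diagCrossCentral n (e.map (· + t)) (c + t) ↔ diagCrossCentral n e c := by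
  induction e using Sym2.ind with | _ x y =>
  simp only [Sym2.map_mk, diagCrossCentral_mk_iff, arcMem, add_sub_add_right_eq_sub]

lemma cross_shift_iff [NeZero (2 * n)] (t : ZMod (2 * n)) (e f : DChord n) :
    Cross n (e.shift t) (f.shift t) ↔ Cross n e f := by
  cases e <;> cases f
  case diag.diag e f => exact crosses_map_add t e f
  case central.central c b d b' =>
    simp only [Cross, shift, ne_eq, add_right_comm _ t (n : ZMod (2 * n)), add_left_inj]
  all_goals exact diagCrossCentral_map_add t _ _

lemma cross_rot_iff [NeZero (2 * n)] (e f : DChord n) :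
    Cross n (rot n e) (rot n f) ↔ Cross n e f := by
  rw [rot_eq_shift, cross_shift_iff]

lemma IsValid.shift {e : DChord n} (he : e.IsValid n) (t : ZMod (2 * n)) :
    (e.shift t).IsValid n := by
  cases e with
  | central c b => trivial
  | diag e =>
    obtain ⟨x, y, rfl, h⟩ := he
    refine ⟨x + t, y + t, Sym2.map_mk .., ?_⟩
    simpa only [ne_eq, add_right_cancel_iff, add_right_comm _ t] using h

lemma IsValid.rot {e : DChord n} (he : e.IsValid n) : (DChord.rot n e).IsValid n := by
  rw [rot_eq_shift]
  exact he.shift _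

lemma isValid_diag_iff (x y : ZMod (2 * n)) :
    (diag s(x, y)).IsValid n ↔ x ≠ y ∧ y ≠ x + 1 ∧ x ≠ y + 1 ∧ y ≠ x + n := by
  constructor
  · rintro ⟨a, b, he, hab⟩
    rcases Sym2.eq_iff.mp he with ⟨rfl, rfl⟩ | ⟨rfl, rfl⟩
    · exact hab
    · exact ⟨hab.1.symm, hab.2.2.1, hab.2.1, fun h => hab.2.2.2 (eq_add_natCast_comm.mpr h)⟩
  · exact fun h => ⟨x, y, rfl, h⟩

def symmetrize (U : Finset (DChord n)) : Finset (DChord n) :=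
  U.biUnion fun y => {y, rot n y}

lemma mem_symmetrize {U : Finset (DChord n)} {c : DChord n} :
    c ∈ symmetrize U ↔ ∃ y ∈ U, c = y ∨ c = rot n y := by
  simp [symmetrize]

lemma rot_mem_symmetrize {U : Finset (DChord n)} {c : DChord n} :
    rot n c ∈ symmetrize U ↔ c ∈ symmetrize U := by
  simp only [mem_symmetrize, rot_eq_iff, rot_rot]
  exact exists_congr fun _ => and_congr_right fun _ => or_comm

lemma not_cross_of_mem_symmetrize [NeZero (2 * n)] {U : Finset (DChord n)}
    (hU : ∀ y ∈ U, ∀ y' ∈ U, ¬ Cross n y y' ∧ ¬ Cross n y (rot n y')) {c c' : DChord n}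
    (hc : c ∈ symmetrize U) (hc' : c' ∈ symmetrize U) : ¬ Cross n c c' := by
  obtain ⟨y, hy, hc⟩ := mem_symmetrize.mp hc
  obtain ⟨y', hy', hc'⟩ := mem_symmetrize.mp hc'
  rcases hc with hc | hc <;> rcases hc' with hc' | hc' <;> subst c c'
  · exact (hU y hy y' hy').1
  · exact (hU y hy y' hy').2
  · rw [cross_comm]; exact (hU y' hy' y hy).2
  · rw [cross_rot_iff]; exact (hU y hy y' hy').1

lemma card_symmetrize {U : Finset (DChord n)} (hU : ∀ y ∈ U, ∀ y' ∈ U, y ≠ rot n y') :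
    (symmetrize U).card = 2 * U.card := by
  rw [symmetrize, Finset.card_biUnion,
    Finset.sum_congr rfl fun y hy => Finset.card_pair (hU y hy y hy), Finset.sum_const,
    smul_eq_mul, mul_comm]
  intro y hy y' hy' hne
  rw [Function.onFun, Finset.disjoint_left]
  intro c hc hc'
  simp only [Finset.mem_insert, Finset.mem_singleton] at hc hc'
  rcases hc with hc | hc <;> rcases hc' with hc' | hc' <;> rw [hc] at hc'
  · exact hne hc'
  · exact hU y hy y' hy' hc'
  · exact hU y' hy' y hy hc'.symm
  · exact hne (by simpa only [rot_rot] using congrArg (rot n) hc')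

end DChord

section Rotation

variable {n : ℕ}

lemma map_shiftEquiv_map_shiftEquiv_neg (T : Finset (DChord n)) (t : ZMod (2 * n)) :
    (T.map (DChord.shiftEquiv t).toEmbedding).map (DChord.shiftEquiv (-t)).toEmbedding = T := by
  ext e
  simp [Finset.mem_map_equiv, DChord.shiftEquiv, DChord.shift_shift, DChord.shift_zero]

lemma DCSTriangulation.map_shift [NeZero (2 * n)] {T : Finset (DChord n)}
    (hT : DCSTriangulation n T) (t : ZMod (2 * n)) :
    DCSTriangulation n (T.map (DChord.shiftEquiv t).toEmbedding) := by
  obtain ⟨⟨hvalid, hnoncross, hmax⟩, hrot⟩ := hT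
  have hcross : ∀ e f, DChord.Cross n (e.shift t) (f.shift t) ↔ DChord.Cross n e f :=
    DChord.cross_shift_iff t
  refine ⟨⟨?_, ?_, ?_⟩, ?_⟩
  · simp only [Finset.forall_mem_map]
    exact fun e he => (hvalid e he).shift t
  · simp only [Finset.forall_mem_map]
    exact fun e he f hf => (hcross e f).not.mpr (hnoncross e he f hf)
  · intro c hc hcT
    rw [Finset.mem_map_equiv] at hcT
    obtain ⟨f, hf, hcf⟩ := hmax _ (hc.shift (-t)) hcT
    refine ⟨f.shift t, Finset.mem_map_of_mem _ hf, ?_⟩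
    rwa [← hcross, DChord.shift_shift, neg_add_cancel, DChord.shift_zero] at hcf
  · simp only [Finset.forall_mem_map]
    intro e he
    exact (DChord.shift_rot t e).symm ▸ Finset.mem_map_of_mem _ (hrot e he)

def typeDGraph.shiftIso [NeZero (2 * n)] (t : ZMod (2 * n)) : typeDGraph n ≃g typeDGraph n where
  toEquiv := (Equiv.finsetCongr (DChord.shiftEquiv t)).subtypeEquiv fun T =>
    ⟨fun h => h.map_shift t,
      fun h => map_shiftEquiv_map_shiftEquiv_neg T t ▸ h.map_shift (-t)⟩
  map_rel_iff' {T T'} := by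
    simp only [typeDGraph, Equiv.subtypeEquiv_apply, Equiv.finsetCongr_apply, ne_eq,
      Finset.map_inj, ← Finset.map_sdiff, Finset.card_map, Subtype.ext_iff]

lemma typeDGraph.shiftIso_bijOn [NeZero (2 * n)] (t a : ZMod (2 * n)) :
    Set.BijOn (typeDGraph.shiftIso t)
      {T | DChord.central a true ∈ T.val ∧
        DChord.central (a + (n : ZMod (2 * n))) true ∈ T.val}
      {T | DChord.central (a + t) true ∈ T.val ∧
        DChord.central (a + t + (n : ZMod (2 * n))) true ∈ T.val} :=
  (typeDGraph.shiftIso t).toEquiv.bijOn fun T => by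
    simp [typeDGraph.shiftIso, Finset.mem_map_equiv, DChord.shiftEquiv, DChord.shift,
      add_right_comm _ t]

end Rotation

section UpperHalf

variable {n : ℕ}

/-- The chord `{u, v}` (`u < v`) of the `(n + 2)`-gon with vertices `0, …, n + 1`, read as a chord
of the upper half of the punctured `2n`-gon: vertices `0, …, n` are the polygon vertices
`0, …, n` and vertex `n + 1` is the puncture, so `{u, n + 1}` is the clockwise central chord at
`u`, and the diameter `{0, n}` becomes the counterclockwise central chord at `0`. -/
def embedNat (n u v : ℕ) : DChord n :=
  if v = n + 1 then .central (u : ZMod (2 * n)) true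
  else if u = 0 ∧ v = n then .central 0 false
  else .diag s((u : ZMod (2 * n)), (v : ZMod (2 * n)))

def embedChord (n : ℕ) : Sym2 (ZMod (n + 2)) → DChord n :=
  Sym2.lift ⟨fun i j => embedNat n (min i.val j.val) (max i.val j.val),
    fun i j => by dsimp only; rw [min_comm, max_comm]⟩

lemma embedChord_natCast {u v : ℕ} (huv : u < v) (hv : v < n + 2) :
    embedChord n s((u : ZMod (n + 2)), (v : ZMod (n + 2))) = embedNat n u v := by
  simp only [embedChord, Sym2.lift_mk, ZMod.val_cast_of_lt hv, ZMod.val_cast_of_lt (huv.trans hv),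
    min_eq_left huv.le, max_eq_right huv.le]

lemma embedNat_central (u : ℕ) : embedNat n u (n + 1) = .central (u : ZMod (2 * n)) true :=
  if_pos rfl

lemma embedNat_zero_central : embedNat n 0 (n + 1) = .central 0 true := by
  rw [embedNat_central, Nat.cast_zero]

lemma embedNat_diameter : embedNat n 0 n = .central 0 false := by
  rw [embedNat, if_neg (by omega), if_pos ⟨rfl, rfl⟩]

lemma cross_embedNat_iff (hn : 0 < n) {u v w z : ℕ} (huv : u < v) (hv : v ≤ n + 1) (hwz : w < z)
    (hz : z ≤ n + 1) :
    DChord.Cross n (embedNat n u v) (embedNat n w z) ↔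
      (u < w ∧ w < v ∧ v < z) ∨ (w < u ∧ u < z ∧ z < v) := by
  have : NeZero (2 * n) := ⟨by omega⟩
  unfold embedNat
  split_ifs <;>
    simp (disch := omega) only [DChord.Cross, crosses_mk_iff, crossPairs,
      diagCrossCentral_mk_iff, arcMem_iff_val, ZMod.val_sub_eq_ite, ne_eq,
      ← (ZMod.val_injective (2 * n)).eq_iff, ZMod.val_natCast_of_lt_two_mul, ZMod.val_zero,
      zero_add, ← Nat.cast_add, Bool.false_eq_true, Bool.true_eq_false, not_true_eq_false,
      not_false_eq_true, false_and, true_and, false_iff] <;>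
    (try split_ifs) <;> omega

lemma crosses_of_cross_embedNat_rot (hn : 0 < n) {u v w z : ℕ} (huv : u < v) (hv : v ≤ n + 1)
    (hwz : w < z) (hz : z ≤ n + 1)
    (h : DChord.Cross n (embedNat n u v) (DChord.rot n (embedNat n w z))) :
    (u < w ∧ w < v ∧ v < z) ∨ (w < u ∧ u < z ∧ z < v) := by
  have : NeZero (2 * n) := ⟨by omega⟩
  unfold embedNat at h
  split_ifs at h <;>
    simp (disch := omega) only [DChord.rot, Sym2.map_mk, DChord.Cross, crosses_mk_iff,
      crossPairs, diagCrossCentral_mk_iff, arcMem_iff_val, ZMod.val_sub_eq_ite, ne_eq,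
      ← (ZMod.val_injective (2 * n)).eq_iff, ZMod.val_natCast_of_lt_two_mul, ZMod.val_zero,
      zero_add, ← Nat.cast_add, Bool.false_eq_true, Bool.true_eq_false, not_true_eq_false,
      not_false_eq_true, false_and, true_and] at h <;>
    (try split_ifs at h) <;> omega

lemma eq_and_eq_of_embedNat_eq (hn : 0 < n) {u v w z : ℕ} (huv : u < v) (hv : v ≤ n + 1)
    (hwz : w < z) (hz : z ≤ n + 1) (h : embedNat n u v = embedNat n w z) : u = w ∧ v = z := by
  have : NeZero (2 * n) := ⟨by omega⟩
  unfold embedNat at h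
  split_ifs at h <;>
    simp (disch := omega) only [DChord.central.injEq, DChord.diag.injEq, Sym2.eq_iff,
      ← (ZMod.val_injective (2 * n)).eq_iff, ZMod.val_natCast_of_lt_two_mul, ZMod.val_zero,
      and_true, Bool.false_eq_true, Bool.true_eq_false, and_false] at h <;>
    (try split_ifs at h) <;> omega

lemma embedNat_ne_rot (hn : 0 < n) {u v w z : ℕ} (huv : u + 2 ≤ v) (hv : v ≤ n + 1)
    (hwz : w + 2 ≤ z) (hz : z ≤ n + 1) : embedNat n u v ≠ DChord.rot n (embedNat n w z) := by
  have : NeZero (2 * n) := ⟨by omega⟩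
  intro h
  unfold embedNat at h
  split_ifs at h <;>
    simp (disch := omega) only [DChord.rot, Sym2.map_mk, DChord.central.injEq,
      DChord.diag.injEq, Sym2.eq_iff, reduceCtorEq, ← (ZMod.val_injective (2 * n)).eq_iff,
      ZMod.val_natCast_of_lt_two_mul, ZMod.val_zero, zero_add, ← Nat.cast_add, and_true,
      Bool.true_eq_false, and_false] at h <;>
    (try split_ifs at h) <;> omega

lemma isValid_embedNat (hn : 0 < n) {u v : ℕ} (huv : u + 2 ≤ v) (hv : v ≤ n + 1) :
    (embedNat n u v).IsValid n := by
  have : NeZero (2 * n) := ⟨by omega⟩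
  unfold embedNat
  split_ifs
  · trivial
  · trivial
  · refine ⟨u, v, rfl, ?_⟩
    simp (disch := omega) only [ne_eq, ← Nat.cast_add_one, ← Nat.cast_add,
      ← (ZMod.val_injective (2 * n)).eq_iff, ZMod.val_natCast_of_lt_two_mul]
    split_ifs <;> omega

lemma exists_embedNat_of_central (hn : 2 ≤ n) {x : ZMod (2 * n)} {b : Bool}
    (hc0 : ¬ DChord.Cross n (.central x b) (.central 0 true)) :
    ∃ u v, u + 2 ≤ v ∧ v ≤ n + 1 ∧
      (.central x b = embedNat n u v ∨ .central x b = DChord.rot n (embedNat n u v)) := by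
  cases b
  · have hx : x = 0 ∨ x = n := by
      simp only [DChord.Cross, ne_eq, Bool.false_eq_true, not_false_eq_true, true_and,
        not_and, not_not] at hc0
      by_cases hx : x = 0
      · exact Or.inl hx
      · simpa only [zero_add] using Or.inr (DChord.eq_add_natCast_comm.mp (hc0 (Ne.symm hx)))
    refine ⟨0, n, by omega, by omega, ?_⟩
    rcases hx with rfl | rfl
    · exact Or.inl embedNat_diameter.symm
    · exact Or.inr (by rw [embedNat_diameter, DChord.rot_central_zero])
  · have : NeZero (2 * n) := ⟨by omega⟩
    rw [← ZMod.natCast_zmod_val x]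
    rcases lt_or_ge x.val n with hx | hx
    · exact ⟨x.val, n + 1, by omega, le_rfl, Or.inl (embedNat_central _).symm⟩
    · refine ⟨x.val - n, n + 1, by have := x.val_lt; omega, le_rfl, Or.inr ?_⟩
      rw [embedNat_central, DChord.rot, ← Nat.cast_add, Nat.sub_add_cancel hx]

lemma exists_embedNat_of_diag (hn : 0 < n) {p q : ℕ} (hpq : p < q) (hq : q < 2 * n)
    (hval : (DChord.diag s((p : ZMod (2 * n)), (q : ZMod (2 * n)))).IsValid n)
    (hc0 : ¬ DChord.Cross n (.diag s((p : ZMod (2 * n)), (q : ZMod (2 * n)))) (.central 0 true))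
    (hcn : ¬ DChord.Cross n (.diag s((p : ZMod (2 * n)), (q : ZMod (2 * n))))
      (.central n true)) :
    ∃ u v, u + 2 ≤ v ∧ v ≤ n + 1 ∧
      (.diag s((p : ZMod (2 * n)), (q : ZMod (2 * n))) = embedNat n u v ∨
        .diag s((p : ZMod (2 * n)), (q : ZMod (2 * n))) = DChord.rot n (embedNat n u v)) := by
  have : NeZero (2 * n) := ⟨by omega⟩
  -- a diagonal separating neither `0` nor `n` from the puncture lies in one half,
  -- or is `{0, q}` with `n < q`, the rotation of `{q - n, n}`
  have key : p + 2 ≤ q ∧ q ≠ p + n ∧ q + 1 ≠ 2 * n + p ∧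
      (q ≤ n ∨ n ≤ p ∨ (p = 0 ∧ n < q)) := by
    rw [DChord.isValid_diag_iff] at hval
    simp (disch := omega) only [DChord.Cross, diagCrossCentral_mk_iff, arcMem_iff_val,
      ZMod.val_sub_eq_ite, ne_eq, ← Nat.cast_add_one, ← Nat.cast_add,
      ← (ZMod.val_injective (2 * n)).eq_iff, ZMod.val_natCast_of_lt_two_mul, ZMod.val_zero]
      at hval hc0 hcn
    split_ifs at hval hc0 hcn <;> omega
  obtain ⟨hgap, hopp, hadj, hlow | hhigh | ⟨rfl, hq'⟩⟩ := key
  · refine ⟨p, q, hgap, by omega, Or.inl ?_⟩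
    rw [embedNat, if_neg (by omega), if_neg (by omega)]
  · refine ⟨p - n, q - n, by omega, by omega, Or.inr ?_⟩
    rw [embedNat, if_neg (by omega), if_neg (by omega), DChord.rot, Sym2.map_mk]
    simp only [← Nat.cast_add, Nat.sub_add_cancel hhigh, Nat.sub_add_cancel (hhigh.trans hpq.le)]
  · refine ⟨q - n, n, by omega, by omega, Or.inr ?_⟩
    rw [embedNat, if_neg (by omega), if_neg (by omega), DChord.rot, Sym2.map_mk,
      DChord.natCast_add_natCast_self, ← Nat.cast_add, Nat.sub_add_cancel hq'.le, Nat.cast_zero,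
      Sym2.eq_swap]

lemma exists_embedNat_of_not_cross (hn : 2 ≤ n) {c : DChord n} (hc : c.IsValid n)
    (hc0 : ¬ DChord.Cross n c (.central 0 true)) (hcn : ¬ DChord.Cross n c (.central n true)) :
    ∃ u v, u + 2 ≤ v ∧ v ≤ n + 1 ∧
      (c = embedNat n u v ∨ c = DChord.rot n (embedNat n u v)) := by
  have hn₀ : 0 < n := by omega
  have : NeZero (2 * n) := ⟨by omega⟩
  cases c with
  | central x b => exact exists_embedNat_of_central hn hc0
  | diag e =>
    obtain ⟨x, y, rfl, hxy⟩ := id hc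
    have hne : x.val ≠ y.val := fun h => hxy.1 (ZMod.val_injective _ h)
    rw [← ZMod.natCast_zmod_val x, ← ZMod.natCast_zmod_val y] at hc0 hcn hc ⊢
    rcases lt_or_gt_of_ne hne with h | h
    · exact exists_embedNat_of_diag hn₀ h y.val_lt hc hc0 hcn
    · rw [Sym2.eq_swap] at hc0 hcn hc ⊢
      exact exists_embedNat_of_diag hn₀ h x.val_lt hc hc0 hcn

lemma exists_embedChord_eq_embedNat {d : Sym2 (ZMod (n + 2))} (hd : IsDiagonal (n + 2) d) :
    ∃ u v : ℕ, u + 2 ≤ v ∧ v ≤ n + 1 ∧ ¬(u = 0 ∧ v = n + 1) ∧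
      d = s((u : ZMod (n + 2)), (v : ZMod (n + 2))) ∧ embedChord n d = embedNat n u v := by
  obtain ⟨u, v, huv, hv, h, rfl⟩ := hd.exists_natCast
  exact ⟨u, v, huv, by omega, by omega, rfl, embedChord_natCast (by omega) hv⟩

lemma cross_embedChord_iff (hn : 0 < n) {d d' : Sym2 (ZMod (n + 2))} (hd : IsDiagonal (n + 2) d)
    (hd' : IsDiagonal (n + 2) d') :
    DChord.Cross n (embedChord n d) (embedChord n d') ↔ Crosses (n + 2) d d' := by
  obtain ⟨u, v, huv, hv, -, rfl, he⟩ := exists_embedChord_eq_embedNat hd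
  obtain ⟨w, z, hwz, hz, -, rfl, he'⟩ := exists_embedChord_eq_embedNat hd'
  rw [he, he', cross_embedNat_iff hn (by omega) hv (by omega) hz,
    crosses_natCast_iff (by omega) (by omega) (by omega) (by omega)]

lemma crosses_of_cross_embedChord_rot (hn : 0 < n) {d d' : Sym2 (ZMod (n + 2))}
    (hd : IsDiagonal (n + 2) d) (hd' : IsDiagonal (n + 2) d')
    (h : DChord.Cross n (embedChord n d) (DChord.rot n (embedChord n d'))) :
    Crosses (n + 2) d d' := by
  obtain ⟨u, v, huv, hv, -, rfl, he⟩ := exists_embedChord_eq_embedNat hd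
  obtain ⟨w, z, hwz, hz, -, rfl, he'⟩ := exists_embedChord_eq_embedNat hd'
  rw [he, he'] at h
  rw [crosses_natCast_iff (by omega) (by omega) (by omega) (by omega)]
  exact crosses_of_cross_embedNat_rot hn (by omega) hv (by omega) hz h

lemma not_cross_embedChord_cw (hn : 0 < n) {d : Sym2 (ZMod (n + 2))}
    (hd : IsDiagonal (n + 2) d) :
    ¬ DChord.Cross n (embedChord n d) (.central 0 true) ∧
      ¬ DChord.Cross n (embedChord n d) (.central n true) := by
  obtain ⟨u, v, huv, hv, -, rfl, he⟩ := exists_embedChord_eq_embedNat hd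
  rw [he, ← embedNat_zero_central, ← embedNat_central,
    cross_embedNat_iff hn (by omega) hv (by omega) le_rfl,
    cross_embedNat_iff hn (by omega) hv (by omega) le_rfl]
  omega

lemma embedChord_injOn (hn : 0 < n) : Set.InjOn (embedChord n) {d | IsDiagonal (n + 2) d} := by
  intro d hd d' hd' h
  obtain ⟨u, v, huv, hv, -, rfl, he⟩ := exists_embedChord_eq_embedNat hd
  obtain ⟨w, z, hwz, hz, -, rfl, he'⟩ := exists_embedChord_eq_embedNat hd'
  rw [he, he'] at h
  obtain ⟨rfl, rfl⟩ := eq_and_eq_of_embedNat_eq hn (by omega) hv (by omega) hz h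
  rfl

lemma embedChord_ne_cw (hn : 0 < n) {d : Sym2 (ZMod (n + 2))} (hd : IsDiagonal (n + 2) d) :
    embedChord n d ≠ .central 0 true ∧ embedChord n d ≠ .central n true := by
  obtain ⟨u, v, huv, hv, hedge, rfl, he⟩ := exists_embedChord_eq_embedNat hd
  rw [he, ← embedNat_zero_central, ← embedNat_central]
  constructor <;> intro h <;>
    have := eq_and_eq_of_embedNat_eq hn (by omega) hv (by omega) le_rfl h <;> omega

lemma embedChord_ne_rot (hn : 0 < n) {d d' : Sym2 (ZMod (n + 2))} (hd : IsDiagonal (n + 2) d)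
    (hd' : IsDiagonal (n + 2) d') : embedChord n d ≠ DChord.rot n (embedChord n d') := by
  obtain ⟨u, v, huv, hv, -, rfl, he⟩ := exists_embedChord_eq_embedNat hd
  obtain ⟨w, z, hwz, hz, -, rfl, he'⟩ := exists_embedChord_eq_embedNat hd'
  rw [he, he']
  exact embedNat_ne_rot hn huv hv hwz hz

lemma isValid_embedChord (hn : 0 < n) {d : Sym2 (ZMod (n + 2))} (hd : IsDiagonal (n + 2) d) :
    (embedChord n d).IsValid n := by
  obtain ⟨u, v, huv, hv, -, rfl, he⟩ := exists_embedChord_eq_embedNat hd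
  exact he ▸ isValid_embedNat hn huv hv

lemma exists_embedChord_of_not_cross (hn : 2 ≤ n) {c : DChord n} (hc : c.IsValid n)
    (hc0 : ¬ DChord.Cross n c (.central 0 true)) (hcn : ¬ DChord.Cross n c (.central n true)) :
    c = .central 0 true ∨ c = .central n true ∨
      ∃ d, IsDiagonal (n + 2) d ∧
        (c = embedChord n d ∨ c = DChord.rot n (embedChord n d)) := by
  obtain ⟨u, v, huv, hv, hc⟩ := exists_embedNat_of_not_cross hn hc hc0 hcn
  by_cases hedge : u = 0 ∧ v = n + 1
  · obtain ⟨rfl, rfl⟩ := hedge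
    rw [embedNat_zero_central] at hc
    rcases hc with hc | hc
    exacts [Or.inl hc, Or.inr (Or.inl (by rw [hc, DChord.rot_central_zero]))]
  · refine Or.inr (Or.inr ⟨_, isDiagonal_natCast huv (by omega) (by omega), ?_⟩)
    rwa [embedChord_natCast (by omega) (by omega)]

end UpperHalf

def symTriang (n : ℕ) (S : Finset (Sym2 (ZMod (n + 2)))) : Finset (DChord n) :=
  DChord.symmetrize (insert (.central 0 true) (S.image (embedChord n)))

open Classical in
noncomputable def halfTriang (n : ℕ) (T : Finset (DChord n)) : Finset (Sym2 (ZMod (n + 2))) :=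
  {d | IsDiagonal (n + 2) d ∧ embedChord n d ∈ T}

section Correspondence

variable {n : ℕ}

lemma mem_symTriang {S : Finset (Sym2 (ZMod (n + 2)))} {c : DChord n} :
    c ∈ symTriang n S ↔ c = .central 0 true ∨ c = .central n true ∨
      ∃ d ∈ S, c = embedChord n d ∨ c = DChord.rot n (embedChord n d) := by
  simp only [symTriang, DChord.mem_symmetrize, Finset.exists_mem_insert,
    Finset.exists_mem_image, DChord.rot_central_zero, or_assoc]

lemma mem_halfTriang {T : Finset (DChord n)} {d : Sym2 (ZMod (n + 2))} :
    d ∈ halfTriang n T ↔ IsDiagonal (n + 2) d ∧ embedChord n d ∈ T := by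
  simp [halfTriang]

lemma rot_mem_symTriang {S : Finset (Sym2 (ZMod (n + 2)))} {c : DChord n} :
    DChord.rot n c ∈ symTriang n S ↔ c ∈ symTriang n S :=
  DChord.rot_mem_symmetrize

lemma embedChord_mem_symTriang (hn : 0 < n) {S : Finset (Sym2 (ZMod (n + 2)))}
    (hS : ∀ e ∈ S, IsDiagonal (n + 2) e) {d : Sym2 (ZMod (n + 2))} (hd : IsDiagonal (n + 2) d) :
    embedChord n d ∈ symTriang n S ↔ d ∈ S := by
  refine ⟨fun h => ?_, fun h => mem_symTriang.mpr (Or.inr (Or.inr ⟨d, h, Or.inl rfl⟩))⟩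
  rcases mem_symTriang.mp h with h | h | ⟨d', hd', h | h⟩
  · exact absurd h (embedChord_ne_cw hn hd).1
  · exact absurd h (embedChord_ne_cw hn hd).2
  · exact embedChord_injOn hn hd (hS d' hd') h ▸ hd'
  · exact absurd h (embedChord_ne_rot hn hd (hS d' hd'))

lemma isTriangulation_halfTriang (hn : 2 ≤ n) {T : Finset (DChord n)} (hT : DCSTriangulation n T)
    (hc0 : .central 0 true ∈ T) (hcn : .central (n : ZMod (2 * n)) true ∈ T) :
    IsTriangulation (n + 2) (halfTriang n T) := by
  have hn₀ : 0 < n := by omega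
  obtain ⟨⟨hvalid, hnoncross, hmax⟩, hrot⟩ := hT
  refine ⟨fun d hd => (mem_halfTriang.mp hd).1, fun d hd d' hd' hcross => ?_,
    fun d hd hdT => ?_⟩
  · obtain ⟨hd, hdT⟩ := mem_halfTriang.mp hd
    obtain ⟨hd', hdT'⟩ := mem_halfTriang.mp hd'
    exact hnoncross _ hdT _ hdT' ((cross_embedChord_iff hn₀ hd hd').mpr hcross)
  · have hnotin : embedChord n d ∉ T := fun h => hdT (mem_halfTriang.mpr ⟨hd, h⟩)
    obtain ⟨f, hf, hcross⟩ := hmax _ (isValid_embedChord hn₀ hd) hnotin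
    rcases exists_embedChord_of_not_cross hn (hvalid f hf) (hnoncross f hf _ hc0)
      (hnoncross f hf _ hcn) with rfl | rfl | ⟨d', hd', rfl | rfl⟩
    · exact absurd hcross (not_cross_embedChord_cw hn₀ hd).1
    · exact absurd hcross (not_cross_embedChord_cw hn₀ hd).2
    · exact ⟨d', mem_halfTriang.mpr ⟨hd', hf⟩,
        (cross_embedChord_iff hn₀ hd hd').mp hcross⟩
    · refine ⟨d', mem_halfTriang.mpr ⟨hd', ?_⟩,
        crosses_of_cross_embedChord_rot hn₀ hd hd' hcross⟩
      simpa only [DChord.rot_rot] using hrot _ hf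

lemma not_cross_upperHalf (hn : 0 < n) {S : Finset (Sym2 (ZMod (n + 2)))}
    (hS : IsTriangulation (n + 2) S) :
    ∀ y ∈ insert (.central 0 true) (S.image (embedChord n)),
      ∀ y' ∈ insert (.central 0 true) (S.image (embedChord n)),
        ¬ DChord.Cross n y y' ∧ ¬ DChord.Cross n y (DChord.rot n y') := by
  have : NeZero (2 * n) := ⟨by omega⟩
  obtain ⟨hdiag, hnoncross, -⟩ := hS
  simp only [Finset.forall_mem_insert, Finset.forall_mem_image, DChord.rot_central_zero]
  refine ⟨⟨⟨fun h => h.1 rfl, fun h => h.1 rfl⟩, fun d' hd' => ?_⟩,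
    fun d hd => ⟨not_cross_embedChord_cw hn (hdiag d hd), fun d' hd' => ?_⟩⟩
  · have h := not_cross_embedChord_cw hn (hdiag d' hd')
    refine ⟨fun hc => h.1 ((DChord.cross_comm _ _).mp hc), fun hc => h.2 ?_⟩
    rwa [DChord.cross_comm, ← DChord.cross_rot_iff, DChord.rot_rot,
      DChord.rot_central_zero] at hc
  · exact ⟨fun h => hnoncross d hd d' hd'
        ((cross_embedChord_iff hn (hdiag d hd) (hdiag d' hd')).mp h),
      fun h => hnoncross d hd d' hd'
        (crosses_of_cross_embedChord_rot hn (hdiag d hd) (hdiag d' hd') h)⟩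

lemma exists_cross_of_not_mem_symTriang (hn : 2 ≤ n) {S : Finset (Sym2 (ZMod (n + 2)))}
    (hS : IsTriangulation (n + 2) S) {c : DChord n} (hc : c.IsValid n)
    (hcS : c ∉ symTriang n S) : ∃ f ∈ symTriang n S, DChord.Cross n c f := by
  have hn₀ : 0 < n := by omega
  obtain ⟨hdiag, -, hmax⟩ := hS
  have hcw0 : .central 0 true ∈ symTriang n S := mem_symTriang.mpr (Or.inl rfl)
  have hcwn : .central n true ∈ symTriang n S := mem_symTriang.mpr (Or.inr (Or.inl rfl))
  by_cases hc0 : DChord.Cross n c (.central 0 true)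
  · exact ⟨_, hcw0, hc0⟩
  by_cases hcn : DChord.Cross n c (.central n true)
  · exact ⟨_, hcwn, hcn⟩
  have : NeZero (2 * n) := ⟨by omega⟩
  rcases exists_embedChord_of_not_cross hn hc hc0 hcn with rfl | rfl | ⟨d, hd, rfl | rfl⟩
  · exact absurd hcw0 hcS
  · exact absurd hcwn hcS
  · rw [embedChord_mem_symTriang hn₀ hdiag hd] at hcS
    obtain ⟨f, hf, hcross⟩ := hmax d hd hcS
    exact ⟨embedChord n f, mem_symTriang.mpr (Or.inr (Or.inr ⟨f, hf, Or.inl rfl⟩)),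
      (cross_embedChord_iff hn₀ hd (hdiag f hf)).mpr hcross⟩
  · rw [rot_mem_symTriang, embedChord_mem_symTriang hn₀ hdiag hd] at hcS
    obtain ⟨f, hf, hcross⟩ := hmax d hd hcS
    exact ⟨DChord.rot n (embedChord n f),
      mem_symTriang.mpr (Or.inr (Or.inr ⟨f, hf, Or.inr rfl⟩)),
      (DChord.cross_rot_iff _ _).mpr ((cross_embedChord_iff hn₀ hd (hdiag f hf)).mpr hcross)⟩

lemma dcsTriangulation_symTriang (hn : 2 ≤ n) {S : Finset (Sym2 (ZMod (n + 2)))}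
    (hS : IsTriangulation (n + 2) S) : DCSTriangulation n (symTriang n S) := by
  have hn₀ : 0 < n := by omega
  have : NeZero (2 * n) := ⟨by omega⟩
  refine ⟨⟨fun c hc => ?_, fun c hc c' hc' => ?_, fun c hc hcS => ?_⟩,
    fun c hc => rot_mem_symTriang.mpr hc⟩
  · rcases mem_symTriang.mp hc with rfl | rfl | ⟨d, hd, rfl | rfl⟩
    · trivial
    · trivial
    · exact isValid_embedChord hn₀ (hS.1 d hd)
    · exact (isValid_embedChord hn₀ (hS.1 d hd)).rot
  · exact DChord.not_cross_of_mem_symmetrize (not_cross_upperHalf hn₀ hS) hc hc'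
  · exact exists_cross_of_not_mem_symTriang hn hS hc hcS

lemma symTriang_halfTriang (hn : 2 ≤ n) {T : Finset (DChord n)} (hT : DCSTriangulation n T)
    (hc0 : .central 0 true ∈ T) (hcn : .central (n : ZMod (2 * n)) true ∈ T) :
    symTriang n (halfTriang n T) = T := by
  ext c
  refine ⟨fun hc => ?_, fun hc => ?_⟩
  · rcases mem_symTriang.mp hc with rfl | rfl | ⟨d, hd, rfl | rfl⟩
    · exact hc0
    · exact hcn
    · exact (mem_halfTriang.mp hd).2
    · exact hT.2 _ (mem_halfTriang.mp hd).2
  · have hvalid := hT.1.1 c hc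
    rcases exists_embedChord_of_not_cross hn hvalid (hT.1.2.1 c hc _ hc0) (hT.1.2.1 c hc _ hcn) with
      rfl | rfl | ⟨d, hd, rfl | rfl⟩
    · exact mem_symTriang.mpr (Or.inl rfl)
    · exact mem_symTriang.mpr (Or.inr (Or.inl rfl))
    · exact mem_symTriang.mpr
        (Or.inr (Or.inr ⟨d, mem_halfTriang.mpr ⟨hd, hc⟩, Or.inl rfl⟩))
    · refine rot_mem_symTriang.mpr (mem_symTriang.mpr (Or.inr (Or.inr ⟨d, ?_, Or.inl rfl⟩)))
      exact mem_halfTriang.mpr ⟨hd, by simpa only [DChord.rot_rot] using hT.2 _ hc⟩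

lemma halfTriang_symTriang (hn : 0 < n) {S : Finset (Sym2 (ZMod (n + 2)))}
    (hS : ∀ e ∈ S, IsDiagonal (n + 2) e) : halfTriang n (symTriang n S) = S := by
  ext d
  rw [mem_halfTriang]
  exact ⟨fun ⟨hd, h⟩ => (embedChord_mem_symTriang hn hS hd).mp h,
    fun h => ⟨hS d h, (embedChord_mem_symTriang hn hS (hS d h)).mpr h⟩⟩

lemma symTriang_sdiff_symTriang (hn : 0 < n) {S S' : Finset (Sym2 (ZMod (n + 2)))}
    (hS : ∀ e ∈ S, IsDiagonal (n + 2) e) (hS' : ∀ e ∈ S', IsDiagonal (n + 2) e) :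
    symTriang n S \ symTriang n S' = DChord.symmetrize ((S \ S').image (embedChord n)) := by
  have key : ∀ {T : Finset (Sym2 (ZMod (n + 2)))} {d c}, (∀ e ∈ T, IsDiagonal (n + 2) e) →
      d ∈ S → (c = embedChord n d ∨ c = DChord.rot n (embedChord n d)) →
      (c ∈ symTriang n T ↔ d ∈ T) := by
    rintro T d c hT hd (rfl | rfl)
    · exact embedChord_mem_symTriang hn hT (hS d hd)
    · rw [rot_mem_symTriang]
      exact embedChord_mem_symTriang hn hT (hS d hd)
  ext c
  simp only [Finset.mem_sdiff, DChord.mem_symmetrize, Finset.exists_mem_image]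
  constructor
  · rintro ⟨hc, hcS'⟩
    rcases mem_symTriang.mp hc with rfl | rfl | ⟨d, hd, h⟩
    · exact absurd (mem_symTriang.mpr (Or.inl rfl)) hcS'
    · exact absurd (mem_symTriang.mpr (Or.inr (Or.inl rfl))) hcS'
    · exact ⟨d, ⟨hd, fun hdS' => hcS' ((key hS' hd h).mpr hdS')⟩, h⟩
  · rintro ⟨d, ⟨hd, hdS'⟩, h⟩
    exact ⟨(key hS hd h).mpr hd, fun hc => hdS' ((key hS' hd h).mp hc)⟩

lemma card_symTriang_sdiff (hn : 0 < n) {S S' : Finset (Sym2 (ZMod (n + 2)))}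
    (hS : ∀ e ∈ S, IsDiagonal (n + 2) e) (hS' : ∀ e ∈ S', IsDiagonal (n + 2) e) :
    (symTriang n S \ symTriang n S').card = 2 * (S \ S').card := by
  have hdiag : ∀ d ∈ S \ S', IsDiagonal (n + 2) d := fun d hd => hS d (Finset.mem_sdiff.mp hd).1
  rw [symTriang_sdiff_symTriang hn hS hS', DChord.card_symmetrize,
    Finset.card_image_of_injOn fun d hd d' hd' => embedChord_injOn hn (hdiag d hd) (hdiag d' hd')]
  simp only [Finset.forall_mem_image]
  exact fun d hd d' hd' => embedChord_ne_rot hn (hdiag d hd) (hdiag d' hd')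

noncomputable def assocGraphAIsoCwClass (hn : 2 ≤ n) :
    assocGraphA (n + 2) ≃g (typeDGraph n).induce
      {T | DChord.central 0 true ∈ T.val ∧
        DChord.central (n : ZMod (2 * n)) true ∈ T.val} where
  toFun S := ⟨⟨symTriang n S, dcsTriangulation_symTriang hn S.2⟩,
    mem_symTriang.mpr (Or.inl rfl), mem_symTriang.mpr (Or.inr (Or.inl rfl))⟩
  invFun T := ⟨halfTriang n T.1.1, isTriangulation_halfTriang hn T.1.2 T.2.1 T.2.2⟩
  left_inv S := Subtype.ext (halfTriang_symTriang (by omega) S.2.1)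
  right_inv T := Subtype.ext (Subtype.ext (symTriang_halfTriang hn T.1.2 T.2.1 T.2.2))
  map_rel_iff' {S S'} := by
    have hn₀ : 0 < n := by omega
    have hinj : symTriang n S.1 = symTriang n S'.1 ↔ S = S' :=
      ⟨fun h => Subtype.ext (by rw [← halfTriang_symTriang hn₀ S.2.1, h,
        halfTriang_symTriang hn₀ S'.2.1]), fun h => h ▸ rfl⟩
    simp only [Equiv.coe_fn_mk, SimpleGraph.induce_adj, typeDGraph, assocGraphA, ne_eq,
      Subtype.ext_iff, hinj, card_symTriang_sdiff hn₀ S.2.1 S'.2.1,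
      card_symTriang_sdiff hn₀ S'.2.1 S.2.1]
    exact and_congr_right fun _ => by omega

end Correspondence

/-- For `n ≥ 2` and a pair `r = {a, a + n}` of opposite vertices of the punctured `2n`-gon, the
class `Ψ(↻ r)` of centrally symmetric triangulations containing the clockwise central chord
pair at `r` induces a subgraph of the type-D associahedron isomorphic to the type-A
associahedron graph `\U0001d51e_{n-1}`, whose vertices are triangulations of an `(n+2)`-gon. -/
theorem typeD_class_iso_assocA (n : ℕ) (hn : 2 ≤ n) (a : ZMod (2 * n)) :
    Nonempty (((typeDGraph n).induce
        {T | DChord.central a true ∈ T.val ∧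
             DChord.central (a + (n : ZMod (2 * n))) true ∈ T.val}) ≃g
      assocGraphA (n + 2)) := by
  have : NeZero (2 * n) := ⟨by omega⟩
  have hbij := typeDGraph.shiftIso_bijOn (-a) a
  rw [add_neg_cancel, zero_add] at hbij
  exact ⟨((typeDGraph.shiftIso (-a)).induce hbij).trans (assocGraphAIsoCwClass hn).symm⟩
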